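/- Let G be a moderate function, let X and (X_n)_{n≥1} be i.i.d. integrable real random variables with E[X]=0, let (X'_n) be an independent copy of the sequence (X_n), and set X*_n := X_n − X'_n. Then the condition 'for every a > 0, the last deviation time L_a is almost surely finite and G(L_a) is integrable' holds for the partial sums of (X_n) if and only if it holds for the partial sums of the symmetrized sequence (X*_n). -/

import Mathlib

/-!
Because `G(∞) = ∞` and `G → ∞`, the layer-cake formula
`G(L) = G(0) + ∑ₖ (G(k+1) - G(k)) 𝟙{L > k}` turns both conditions into the finiteness of
`∑ₖ (G(k+1) - G(k)) P(L_a > k)`, and `{L_a ≥ N}` is the event that some Cesàro mean of index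
`≥ N` deviates from `0` by at least `a`. So it suffices to compare these tail probabilities up to
a factor `2`, after halving `a`, for large `N`. One direction is the triangle inequality together
with `X' ∼ X`. For the other, split according to the first index `k ≥ N` with `|S_k / k| ≥ a`:
by the weak law of large numbers `|S'_k / k| < a / 2` with probability at least `1 / 2`,
independently of `X`, and on that event `|S*_k / k| ≥ a / 2`.
-/

open MeasureTheory ProbabilityTheory ENNReal

/-- Partial sums `S_n = X_1 + ⋯ + X_n` (here `X i` for `i < n`). -/
noncomputable def partialSum {Ω : Type*} (X : ℕ → Ω → ℝ) (n : ℕ) (ω : Ω) : ℝ :=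
  ∑ i ∈ Finset.range n, X i ω

/-- The last deviation time `L_a = sup({0} ∪ {n ≥ 1 : |S_n/n| ≥ a}) ∈ ℕ ∪ {∞}`. -/
noncomputable def lastDev {Ω : Type*} (X : ℕ → Ω → ℝ) (a : ℝ) (ω : Ω) : ℕ∞ :=
  ⨆ n ∈ {n : ℕ | 1 ≤ n ∧ a ≤ |partialSum X n ω / n|}, (n : ℕ∞)

/-- Evaluation of `G` at an extended natural number, with `G(∞) = ∞`. -/
noncomputable def evalG (G : ℝ → ℝ) : ℕ∞ → ℝ≥0∞
  | ⊤ => ⊤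
  | (n : ℕ) => ENNReal.ofReal (G n)

/-- A positive function on `[0,∞)` is moderate if it is non-decreasing, tends to `+∞`,
and `G(2t) ≤ c·G(t)`. -/
def Moderate (G : ℝ → ℝ) : Prop :=
  (∀ t ≥ 0, 0 < G t) ∧ MonotoneOn G (Set.Ici 0) ∧
    Filter.Tendsto G Filter.atTop Filter.atTop ∧
    ∃ c : ℝ, ∀ t ≥ 0, G (2 * t) ≤ c * G t

open MeasureTheory ProbabilityTheory Filter Topology Function

section Deviation

variable {Ω : Type*}

def deviationSet (Y : ℕ → Ω → ℝ) (a : ℝ) (N : ℕ) : Set Ω :=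
  {ω | ∃ j, N ≤ j ∧ 1 ≤ j ∧ a ≤ |partialSum Y j ω / j|}

lemma natCast_le_lastDev_iff {Y : ℕ → Ω → ℝ} {a : ℝ} {ω : Ω} {k : ℕ} (hk : 1 ≤ k) :
    (k : ℕ∞) ≤ lastDev Y a ω ↔ ω ∈ deviationSet Y a k := by
  constructor
  · intro h
    by_contra hc
    have hle : lastDev Y a ω ≤ ((k - 1 : ℕ) : ℕ∞) :=
      iSup₂_le fun j hj =>
        Nat.cast_le.2 (Nat.le_sub_one_of_lt (not_le.1 fun hkj => hc ⟨j, hkj, hj⟩))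
    have := Nat.cast_le.1 (h.trans hle)
    omega
  · rintro ⟨j, hkj, hj⟩
    exact le_iSup₂_of_le j hj (Nat.cast_le.2 hkj)

lemma partialSum_sub (Y Y' : ℕ → Ω → ℝ) (n : ℕ) (ω : Ω) :
    partialSum (fun n ω => Y n ω - Y' n ω) n ω = partialSum Y n ω - partialSum Y' n ω :=
  Finset.sum_sub_distrib _ _

lemma deviationSet_sub_subset_union (Y Y' : ℕ → Ω → ℝ) (a : ℝ) (N : ℕ) :
    deviationSet (fun n ω => Y n ω - Y' n ω) a N ⊆
      deviationSet Y (a / 2) N ∪ deviationSet Y' (a / 2) N := by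
  rintro ω ⟨j, hNj, hj, hdev⟩
  rw [partialSum_sub, sub_div] at hdev
  have := hdev.trans (abs_sub _ _)
  by_cases hY : a / 2 ≤ |partialSum Y j ω / j|
  · exact Or.inl ⟨j, hNj, hj, hY⟩
  · exact Or.inr ⟨j, hNj, hj, by linarith⟩

lemma mem_deviationSet_sub {Y Y' : ℕ → Ω → ℝ} {a : ℝ} {N k : ℕ} {ω : Ω} (hNk : N ≤ k)
    (hk : 1 ≤ k) (hY : a ≤ |partialSum Y k ω / k|) (hY' : |partialSum Y' k ω / k| < a / 2) :
    ω ∈ deviationSet (fun n ω => Y n ω - Y' n ω) (a / 2) N := by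
  refine ⟨k, hNk, hk, ?_⟩
  rw [partialSum_sub, sub_div]
  linarith [abs_sub_abs_le_abs_sub (partialSum Y k ω / k) (partialSum Y' k ω / k)]

end Deviation

section Increment

def increment (G : ℝ → ℝ) (k : ℕ) : ℝ≥0∞ :=
  ENNReal.ofReal (G (k + 1 : ℕ)) - ENNReal.ofReal (G k)

variable {G : ℝ → ℝ}

lemma increment_ne_top (G : ℝ → ℝ) (k : ℕ) : increment G k ≠ ⊤ :=
  ENNReal.sub_ne_top ENNReal.ofReal_ne_top

lemma monotone_ofReal_comp_natCast (hmono : MonotoneOn G (Set.Ici 0)) :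
    Monotone fun n : ℕ => ENNReal.ofReal (G n) := fun m n h =>
  ENNReal.ofReal_le_ofReal <|
    hmono (Set.mem_Ici.2 (Nat.cast_nonneg m)) (Set.mem_Ici.2 (Nat.cast_nonneg n)) (Nat.cast_le.2 h)

lemma ofReal_add_sum_increment (hmono : MonotoneOn G (Set.Ici 0)) (m : ℕ) :
    ENNReal.ofReal (G 0) + ∑ k ∈ Finset.range m, increment G k = ENNReal.ofReal (G m) := by
  induction m with
  | zero => simp
  | succ m ih =>
    rw [Finset.sum_range_succ, ← add_assoc, ih, increment,
      add_tsub_cancel_of_le (monotone_ofReal_comp_natCast hmono m.le_succ)]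

lemma tsum_increment_eq_top (hmono : MonotoneOn G (Set.Ici 0)) (htop : Tendsto G atTop atTop) :
    ∑' k, increment G k = ⊤ := by
  have hsup : ⨆ m : ℕ, ENNReal.ofReal (G m) = ⊤ :=
    tendsto_nhds_unique (tendsto_atTop_iSup (monotone_ofReal_comp_natCast hmono))
      (ENNReal.tendsto_ofReal_atTop.comp (htop.comp tendsto_natCast_atTop_atTop))
  have : ENNReal.ofReal (G 0) + ∑' k, increment G k = ⊤ := by
    rw [ENNReal.tsum_eq_iSup_nat, ENNReal.add_iSup]
    simpa only [ofReal_add_sum_increment hmono] using hsup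
  exact (ENNReal.add_eq_top.1 this).resolve_left ENNReal.ofReal_ne_top

lemma evalG_eq_add_tsum (hmono : MonotoneOn G (Set.Ici 0)) (htop : Tendsto G atTop atTop)
    (L : ℕ∞) :
    evalG G L = ENNReal.ofReal (G 0) + ∑' k : ℕ, if (k + 1 : ℕ∞) ≤ L then increment G k else 0 := by
  induction L using ENat.recTopCoe with
  | top =>
    simp only [le_top, if_true, tsum_increment_eq_top hmono htop, add_top]
    rfl
  | coe m =>
    have hmem : ∀ k : ℕ, (k + 1 : ℕ∞) ≤ m ↔ k ∈ Finset.range m := fun k => by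
      rw [Finset.mem_range]; norm_cast
    simp_rw [hmem]
    rw [tsum_eq_sum (s := Finset.range m) fun k hk => if_neg hk,
      Finset.sum_congr rfl fun k hk => if_pos hk, ofReal_add_sum_increment hmono]
    rfl

end Increment

section LastDev

variable {Ω : Type*} {mΩ : MeasurableSpace Ω} {μ : Measure Ω} {G : ℝ → ℝ} {Y : ℕ → Ω → ℝ}

lemma measurable_partialSum (hY : ∀ n, Measurable (Y n)) (n : ℕ) :
    Measurable (partialSum Y n) :=
  Finset.measurable_sum _ fun i _ => hY i

lemma measurableSet_le_abs_partialSum_div (hY : ∀ n, Measurable (Y n)) (a : ℝ) (n : ℕ) :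
    MeasurableSet {ω | a ≤ |partialSum Y n ω / n|} :=
  measurableSet_le measurable_const ((measurable_partialSum hY n).div_const _).abs

lemma measurableSet_abs_partialSum_div_lt (hY : ∀ n, Measurable (Y n)) (a : ℝ) (n : ℕ) :
    MeasurableSet {ω | |partialSum Y n ω / n| < a} :=
  measurableSet_lt ((measurable_partialSum hY n).div_const _).abs measurable_const

lemma measurableSet_deviationSet (hY : ∀ n, Measurable (Y n)) (a : ℝ) (N : ℕ) :
    MeasurableSet (deviationSet Y a N) := by
  have : deviationSet Y a N =
      ⋃ j, ⋃ (_ : N ≤ j ∧ 1 ≤ j), {ω | a ≤ |partialSum Y j ω / j|} := by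
    ext ω; simp [deviationSet, and_assoc]
  rw [this]
  exact .iUnion fun j => .iUnion fun _ => measurableSet_le_abs_partialSum_div hY a j

lemma evalG_lastDev_eq_add_tsum (hmono : MonotoneOn G (Set.Ici 0))
    (htop : Tendsto G atTop atTop) (a : ℝ) (ω : Ω) :
    evalG G (lastDev Y a ω) = ENNReal.ofReal (G 0) +
      ∑' k, (deviationSet Y a (k + 1)).indicator (fun _ => increment G k) ω := by
  classical
  rw [evalG_eq_add_tsum hmono htop]
  congr 1
  refine tsum_congr fun k => ?_
  simp only [Set.indicator_apply, ← natCast_le_lastDev_iff k.succ_pos, Nat.cast_succ]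

lemma lintegral_evalG_lastDev (hmono : MonotoneOn G (Set.Ici 0))
    (htop : Tendsto G atTop atTop) (hY : ∀ n, Measurable (Y n)) (a : ℝ) :
    ∫⁻ ω, evalG G (lastDev Y a ω) ∂μ = ENNReal.ofReal (G 0) * μ Set.univ +
      ∑' k, increment G k * μ (deviationSet Y a (k + 1)) := by
  simp_rw [evalG_lastDev_eq_add_tsum hmono htop]
  rw [lintegral_add_left measurable_const, lintegral_const,
    lintegral_tsum fun k => (measurable_const.indicator
      (measurableSet_deviationSet hY a (k + 1))).aemeasurable]
  simp_rw [lintegral_indicator_const (measurableSet_deviationSet hY a _)]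

lemma ae_lastDev_ne_top_and_lintegral_lt_top_iff [IsFiniteMeasure μ]
    (hmono : MonotoneOn G (Set.Ici 0)) (htop : Tendsto G atTop atTop)
    (hY : ∀ n, Measurable (Y n)) (a : ℝ) :
    ((∀ᵐ ω ∂μ, lastDev Y a ω ≠ ⊤) ∧ ∫⁻ ω, evalG G (lastDev Y a ω) ∂μ < ⊤) ↔
      ∑' k, increment G k * μ (deviationSet Y a (k + 1)) < ⊤ := by
  have hlt : ∫⁻ ω, evalG G (lastDev Y a ω) ∂μ < ⊤ ↔
      ∑' k, increment G k * μ (deviationSet Y a (k + 1)) < ⊤ := by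
    rw [lintegral_evalG_lastDev hmono htop hY, ENNReal.add_lt_top,
      and_iff_right (ENNReal.mul_lt_top ENNReal.ofReal_lt_top (measure_lt_top μ _))]
  refine ⟨fun h => hlt.1 h.2, fun h => ⟨?_, hlt.2 h⟩⟩
  -- `{L_a = ∞}` lies in every `{L_a > k}`, while the increments of `G` sum to `∞`.
  rw [ae_iff]
  simp only [not_not]
  by_contra hpos
  have hle : ∑' k, increment G k * μ {ω | lastDev Y a ω = ⊤} ≤
      ∑' k, increment G k * μ (deviationSet Y a (k + 1)) :=
    ENNReal.tsum_le_tsum fun k => mul_le_mul_right (measure_mono fun ω hω =>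
      (natCast_le_lastDev_iff k.succ_pos).1 (hω.symm ▸ le_top)) _
  rw [ENNReal.tsum_mul_right, tsum_increment_eq_top hmono htop, ENNReal.top_mul hpos] at hle
  exact h.ne (top_le_iff.1 hle)

end LastDev

lemma ENNReal.tsum_mul_lt_top_of_eventually_le_mul {d p q : ℕ → ℝ≥0∞} {C : ℝ≥0∞}
    (hd : ∀ k, d k ≠ ⊤) (hp : ∀ k, p k ≠ ⊤) (hC : C ≠ ⊤) (hpq : ∀ᶠ k in atTop, p k ≤ C * q k)
    (hq : ∑' k, d k * q k < ⊤) : ∑' k, d k * p k < ⊤ := by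
  obtain ⟨N, hN⟩ := eventually_atTop.1 hpq
  rw [← ENNReal.summable.sum_add_tsum_nat_add' (k := N)]
  refine ENNReal.add_lt_top.2 ⟨ENNReal.sum_lt_top.2 fun k _ => ENNReal.mul_lt_top
    (hd k).lt_top (hp k).lt_top, ?_⟩
  calc ∑' i, d (i + N) * p (i + N) ≤ ∑' i, C * (d (i + N) * q (i + N)) :=
        ENNReal.tsum_le_tsum fun i => by
          rw [mul_left_comm]; gcongr; exact hN _ (Nat.le_add_left N i)
    _ = C * ∑' i, d (i + N) * q (i + N) := ENNReal.tsum_mul_left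
    _ ≤ C * ∑' k, d k * q k := by
        gcongr _ * ?_
        exact ENNReal.tsum_comp_le_tsum_of_injective (add_left_injective N) fun k => d k * q k
    _ < ⊤ := ENNReal.mul_lt_top hC.lt_top hq

section Symmetrization

variable {Ω : Type*} {mΩ : MeasurableSpace Ω} {μ : Measure Ω}

lemma measure_le_two_mul_measure_inter_of_indep {m₁ m₂ : MeasurableSpace Ω}
    (hind : Indep m₁ m₂ μ) {s t : Set Ω} (hs : MeasurableSet[m₁] s) (ht : MeasurableSet[m₂] t)
    (ht_half : 2⁻¹ ≤ μ t) : μ s ≤ 2 * μ (s ∩ t) := by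
  rw [(Indep_iff _ _ _).1 hind s t hs ht]
  calc μ s = 2 * (μ s * 2⁻¹) := by
        rw [mul_left_comm, ENNReal.mul_inv_cancel two_ne_zero ENNReal.ofNat_ne_top, mul_one]
    _ ≤ 2 * (μ s * μ t) := by gcongr

lemma measure_deviationSet_le_two_mul_deviationSet_sub {m₁ m₂ : MeasurableSpace Ω}
    (hm₁ : m₁ ≤ mΩ) (hm₂ : m₂ ≤ mΩ) (hind : Indep m₁ m₂ μ) {Y Y' : ℕ → Ω → ℝ}
    (hY : ∀ n, Measurable[m₁] (Y n)) (hY' : ∀ n, Measurable[m₂] (Y' n)) {a : ℝ} {N : ℕ}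
    (hsmall : ∀ k ≥ N, 2⁻¹ ≤ μ {ω | |partialSum Y' k ω / k| < a / 2}) :
    μ (deviationSet Y a N) ≤ 2 * μ (deviationSet (fun n ω => Y n ω - Y' n ω) (a / 2) N) := by
  set A : ℕ → Set Ω := fun k => {ω | (N ≤ k ∧ 1 ≤ k) ∧ a ≤ |partialSum Y k ω / k|}
  set H : ℕ → Set Ω := fun k => {ω | |partialSum Y' k ω / k| < a / 2}
  have hA : ∀ k, MeasurableSet[m₁] (A k) := fun k => (MeasurableSet.const (m := m₁) _).inter <|
    measurableSet_le_abs_partialSum_div (mΩ := m₁) hY a k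
  have hD : ∀ k, MeasurableSet[m₁] (disjointed A k) := MeasurableSet.disjointed hA
  have hH : ∀ k, MeasurableSet[m₂] (H k) :=
    measurableSet_abs_partialSum_div_lt (mΩ := m₂) hY' (a / 2)
  have hunion : deviationSet Y a N = ⋃ k, disjointed A k := by
    rw [iUnion_disjointed]
    ext ω
    simp [deviationSet, A, and_assoc]
  have hpiece : ∀ k, μ (disjointed A k) ≤ 2 * μ (disjointed A k ∩ H k) := by
    intro k
    by_cases hk : N ≤ k
    · exact measure_le_two_mul_measure_inter_of_indep hind (hD k) (hH k) (hsmall k hk)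
    · have : disjointed A k = ∅ :=
        Set.subset_empty_iff.1 fun ω hω => hk (disjointed_subset A k hω).1.1
      simp [this]
  have hsub : (⋃ k, disjointed A k ∩ H k) ⊆
      deviationSet (fun n ω => Y n ω - Y' n ω) (a / 2) N := by
    refine Set.iUnion_subset fun k ω ⟨hωD, hωH⟩ => ?_
    obtain ⟨⟨hNk, hk⟩, hdev⟩ := disjointed_subset A k hωD
    exact mem_deviationSet_sub hNk hk hdev hωH
  calc μ (deviationSet Y a N) = ∑' k, μ (disjointed A k) := by
        rw [hunion, measure_iUnion (disjoint_disjointed A) fun k => hm₁ _ (hD k)]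
    _ ≤ ∑' k, 2 * μ (disjointed A k ∩ H k) := ENNReal.tsum_le_tsum hpiece
    _ = 2 * μ (⋃ k, disjointed A k ∩ H k) := by
        rw [ENNReal.tsum_mul_left, measure_iUnion
          ((disjoint_disjointed A).mono fun i j h => h.mono Set.inter_subset_left
            Set.inter_subset_left)
          fun k => (hm₁ _ (hD k)).inter (hm₂ _ (hH k))]
    _ ≤ _ := by gcongr

end Symmetrization

section WeakLaw

variable {Ω : Type*} [MeasurableSpace Ω] {μ : Measure Ω} {Y : ℕ → Ω → ℝ}

lemma tendsto_measure_le_abs_partialSum_div [IsFiniteMeasure μ] (hY : ∀ n, Measurable (Y n))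
    (hint : Integrable (Y 0) μ) (hindep : Pairwise ((· ⟂ᵢ[μ] ·) on Y))
    (hident : ∀ i, IdentDistrib (Y i) (Y 0) μ μ) (hcent : μ[Y 0] = 0) {ε : ℝ} (hε : 0 < ε) :
    Tendsto (fun n : ℕ => μ {ω | ε ≤ |partialSum Y n ω / n|}) atTop (𝓝 0) := by
  have hae : ∀ᵐ ω ∂μ, Tendsto (fun n : ℕ => partialSum Y n ω / n) atTop (𝓝 0) := by
    filter_upwards [strong_law_ae Y hint hindep hident] with ω hω
    rw [hcent] at hω
    simpa [partialSum, div_eq_inv_mul] using hω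
  have := tendstoInMeasure_of_tendsto_ae
    (fun n => ((measurable_partialSum hY n).div_const _).aestronglyMeasurable) hae
  simpa only [Real.dist_eq, sub_zero] using tendstoInMeasure_iff_dist.1 this ε hε

lemma eventually_inv_two_le_measure_abs_partialSum_div_lt [IsProbabilityMeasure μ]
    (hY : ∀ n, Measurable (Y n)) (hint : Integrable (Y 0) μ)
    (hindep : Pairwise ((· ⟂ᵢ[μ] ·) on Y)) (hident : ∀ i, IdentDistrib (Y i) (Y 0) μ μ)
    (hcent : μ[Y 0] = 0) {ε : ℝ} (hε : 0 < ε) :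
    ∀ᶠ n : ℕ in atTop, 2⁻¹ ≤ μ {ω | |partialSum Y n ω / n| < ε} := by
  filter_upwards [(tendsto_measure_le_abs_partialSum_div hY hint hindep hident hcent
    hε).eventually_le_const (by norm_num : (0 : ℝ≥0∞) < 2⁻¹)] with n hn
  have hcompl : {ω | |partialSum Y n ω / n| < ε} = {ω | ε ≤ |partialSum Y n ω / n|}ᶜ := by
    ext ω; simp
  rw [hcompl, prob_compl_eq_one_sub (measurableSet_le_abs_partialSum_div hY ε n),
    ← ENNReal.one_sub_inv_two]
  exact tsub_le_tsub_left hn 1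

end WeakLaw

section IndependentCopy

variable {Ω : Type*} [MeasurableSpace Ω] {μ : Measure Ω} {X : Ω → ℝ} {Z : ℕ × Bool → Ω → ℝ}

lemma map_copy_eq (hZ : ∀ p, Measurable (Z p)) (hindep : iIndepFun Z μ)
    (hident : ∀ p, IdentDistrib (Z p) X μ μ) (b b' : Bool) :
    μ.map (fun ω n => Z (n, b) ω) = μ.map (fun ω n => Z (n, b') ω) := by
  have hinj : ∀ b : Bool, Injective fun n : ℕ => (n, b) := fun b m n h => (Prod.mk.inj h).1
  rw [(hindep.precomp (hinj b)).map_fun_eq_infinitePi_map fun n => hZ _,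
    (hindep.precomp (hinj b')).map_fun_eq_infinitePi_map fun n => hZ _]
  congr
  funext n
  exact (hident (n, b)).map_eq.trans (hident (n, b')).map_eq.symm

lemma measure_deviationSet_copy_eq (hZ : ∀ p, Measurable (Z p)) (hindep : iIndepFun Z μ)
    (hident : ∀ p, IdentDistrib (Z p) X μ μ) (b b' : Bool) (a : ℝ) (N : ℕ) :
    μ (deviationSet (fun n => Z (n, b)) a N) = μ (deviationSet (fun n => Z (n, b')) a N) := by
  have hE := measurableSet_deviationSet (fun n => measurable_pi_apply n) a N
  have hseq : ∀ b, Measurable fun ω n => Z (n, b) ω := fun b =>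
    measurable_pi_lambda _ fun n => hZ _
  change μ ((fun ω n => Z (n, b) ω) ⁻¹' deviationSet (fun n (x : ℕ → ℝ) => x n) a N) =
    μ ((fun ω n => Z (n, b') ω) ⁻¹' deviationSet (fun n (x : ℕ → ℝ) => x n) a N)
  rw [← Measure.map_apply (hseq b) hE, ← Measure.map_apply (hseq b') hE,
    map_copy_eq hZ hindep hident]

lemma measure_deviationSet_sub_le (hZ : ∀ p, Measurable (Z p)) (hindep : iIndepFun Z μ)
    (hident : ∀ p, IdentDistrib (Z p) X μ μ) (a : ℝ) (N : ℕ) :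
    μ (deviationSet (fun n ω => Z (n, false) ω - Z (n, true) ω) a N) ≤
      2 * μ (deviationSet (fun n => Z (n, false)) (a / 2) N) :=
  calc _ ≤ μ (deviationSet (fun n => Z (n, false)) (a / 2) N ∪
        deviationSet (fun n => Z (n, true)) (a / 2) N) :=
        measure_mono (deviationSet_sub_subset_union _ _ a N)
    _ ≤ μ (deviationSet (fun n => Z (n, false)) (a / 2) N) +
        μ (deviationSet (fun n => Z (n, true)) (a / 2) N) := measure_union_le _ _
    _ = _ := by rw [measure_deviationSet_copy_eq hZ hindep hident true false, two_mul]

lemma eventually_measure_deviationSet_le [IsProbabilityMeasure μ] (hZ : ∀ p, Measurable (Z p))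
    (hindep : iIndepFun Z μ) (hident : ∀ p, IdentDistrib (Z p) X μ μ)
    (hint : Integrable X μ) (hcent : μ[X] = 0) {a : ℝ} (ha : 0 < a) :
    ∀ᶠ N in atTop, μ (deviationSet (fun n => Z (n, false)) a N) ≤
      2 * μ (deviationSet (fun n ω => Z (n, false) ω - Z (n, true) ω) (a / 2) N) := by
  let m : Bool → MeasurableSpace Ω := fun b =>
    ⨆ p ∈ {p : ℕ × Bool | p.2 = b}, MeasurableSpace.comap (Z p) inferInstance
  have hle : ∀ b, m b ≤ ‹_› := fun b => iSup₂_le fun p _ => (hZ p).comap_le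
  have hind : Indep (m false) (m true) μ :=
    indep_iSup_of_disjoint (fun p => (hZ p).comap_le) hindep.iIndep
      (Set.disjoint_left.2 fun p hf ht => by simp_all)
  have hmeas : ∀ b n, Measurable[m b] (Z (n, b)) := fun b n =>
    measurable_iff_comap_le.2 <|
      le_iSup₂ (f := fun p (_ : p ∈ {p : ℕ × Bool | p.2 = b}) =>
        MeasurableSpace.comap (Z p) inferInstance) (n, b) rfl
  have hsmall := eventually_inv_two_le_measure_abs_partialSum_div_lt
    (Y := fun n => Z (n, true)) (fun n => hZ _) ((hident (0, true)).integrable_iff.2 hint)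
    (fun i j hij => hindep.indepFun (by simpa using hij))
    (fun i => (hident (i, true)).trans (hident (0, true)).symm)
    ((hident (0, true)).integral_eq.trans hcent) (half_pos ha)
  filter_upwards [eventually_forall_ge_atTop.2 hsmall] with N hN
  exact measure_deviationSet_le_two_mul_deviationSet_sub (hle false) (hle true) hind
    (hmeas false) (hmeas true) hN

end IndependentCopy

theorem stmt11_general {Ω : Type*} [MeasurableSpace Ω] (μ : Measure Ω) [IsProbabilityMeasure μ]
    (X : Ω → ℝ) (Z : ℕ × Bool → Ω → ℝ)
    (hZ : ∀ p, Measurable (Z p))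
    (hindep : iIndepFun Z μ)
    (hident : ∀ p, IdentDistrib (Z p) X μ μ)
    (hint : Integrable X μ) (hcent : μ[X] = 0)
    (G : ℝ → ℝ) (hG : Moderate G) :
    (∀ a > (0 : ℝ), (∀ᵐ ω ∂μ, lastDev (fun n => Z (n, false)) a ω ≠ ⊤) ∧
        ∫⁻ ω, evalG G (lastDev (fun n => Z (n, false)) a ω) ∂μ < ⊤) ↔
      (∀ a > (0 : ℝ),
        (∀ᵐ ω ∂μ, lastDev (fun n ω' => Z (n, false) ω' - Z (n, true) ω') a ω ≠ ⊤) ∧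
        ∫⁻ ω, evalG G (lastDev (fun n ω' => Z (n, false) ω' - Z (n, true) ω') a ω) ∂μ
          < ⊤) := by
  obtain ⟨-, hmono, htop, -⟩ := hG
  simp only [ae_lastDev_ne_top_and_lintegral_lt_top_iff hmono htop fun n => hZ (n, false),
    ae_lastDev_ne_top_and_lintegral_lt_top_iff hmono htop
      (Y := fun n ω => Z (n, false) ω - Z (n, true) ω) fun n => (hZ _).sub (hZ _)]
  refine ⟨fun h a ha => ?_, fun h a ha => ?_⟩
  · exact ENNReal.tsum_mul_lt_top_of_eventually_le_mul (increment_ne_top G)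
      (fun k => measure_ne_top μ _) ENNReal.ofNat_ne_top
      (.of_forall fun k => measure_deviationSet_sub_le hZ hindep hident a (k + 1))
      (h (a / 2) (half_pos ha))
  · exact ENNReal.tsum_mul_lt_top_of_eventually_le_mul (increment_ne_top G)
      (fun k => measure_ne_top μ _) ENNReal.ofNat_ne_top
      ((tendsto_add_atTop_nat 1).eventually
        (eventually_measure_deviationSet_le hZ hindep hident hint hcent ha))
      (h (a / 2) (half_pos ha))

/-- `Z (n, false)` plays the role of `X_n` and `Z (n, true)` the role of `X'_n`, an
independent copy of the sequence; `X*_n := X_n - X'_n` is the symmetrized sequence. -/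
theorem stmt11 {Ω : Type*} [MeasurableSpace Ω] (μ : Measure Ω) [IsProbabilityMeasure μ]
    (X : Ω → ℝ) (Z : ℕ × Bool → Ω → ℝ)
    (hX : Measurable X) (hZ : ∀ p, Measurable (Z p))
    (hindep : iIndepFun Z μ)
    (hident : ∀ p, IdentDistrib (Z p) X μ μ)
    (hint : Integrable X μ) (hcent : μ[X] = 0)
    (G : ℝ → ℝ) (hG : Moderate G) :
    (∀ a > (0 : ℝ), (∀ᵐ ω ∂μ, lastDev (fun n => Z (n, false)) a ω ≠ ⊤) ∧
        ∫⁻ ω, evalG G (lastDev (fun n => Z (n, false)) a ω) ∂μ < ⊤) ↔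
      (∀ a > (0 : ℝ),
        (∀ᵐ ω ∂μ, lastDev (fun n ω' => Z (n, false) ω' - Z (n, true) ω') a ω ≠ ⊤) ∧
        ∫⁻ ω, evalG G (lastDev (fun n ω' => Z (n, false) ω' - Z (n, true) ω') a ω) ∂μ
          < ⊤) :=
  stmt11_general μ X Z hZ hindep hident hint hcent G hG
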